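/- The function z ↦ tanh(z/2)/z is strictly decreasing on (0,∞). -/

import Mathlib

open Real

lemma tanh_half_div_hasDerivAt {x : ℝ} (hx : x ≠ 0) :
    HasDerivAt (fun z : ℝ => Real.tanh (z / 2) / z)
      ((1 / Real.cosh (x / 2) ^ 2 * (1 / 2) * x - Real.tanh (x / 2)) / x ^ 2) x := by
  have hs : HasDerivAt (fun z : ℝ => Real.sinh (z / 2)) (Real.cosh (x / 2) * (1 / 2)) x := by
    have := (Real.hasDerivAt_sinh (x / 2)).comp x
      ((hasDerivAt_id x).div_const 2)
    simpa [Function.comp_def] using this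
  have hc : HasDerivAt (fun z : ℝ => Real.cosh (z / 2)) (Real.sinh (x / 2) * (1 / 2)) x := by
    have := (Real.hasDerivAt_cosh (x / 2)).comp x
      ((hasDerivAt_id x).div_const 2)
    simpa [Function.comp_def] using this
  have hcpos : Real.cosh (x / 2) ≠ 0 := (Real.cosh_pos (x/2)).ne'
  have ht : HasDerivAt (fun z : ℝ => Real.tanh (z / 2))
      (1 / Real.cosh (x / 2) ^ 2 * (1 / 2)) x := by
    have h := hs.div hc hcpos
    have heq : (Real.cosh (x / 2) * (1 / 2) * Real.cosh (x / 2) -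
        Real.sinh (x / 2) * (Real.sinh (x / 2) * (1 / 2))) / Real.cosh (x / 2) ^ 2
        = 1 / Real.cosh (x / 2) ^ 2 * (1 / 2) := by
      have hpy : Real.cosh (x / 2) ^ 2 - Real.sinh (x / 2) ^ 2 = 1 :=
        Real.cosh_sq_sub_sinh_sq (x / 2)
      field_simp
      nlinarith [hpy]
    have h' : HasDerivAt (fun z : ℝ => Real.tanh (z / 2))
        ((Real.cosh (x / 2) * (1 / 2) * Real.cosh (x / 2) -
        Real.sinh (x / 2) * (Real.sinh (x / 2) * (1 / 2))) / Real.cosh (x / 2) ^ 2) x := by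
      simpa [Real.tanh_eq_sinh_div_cosh, Pi.div_def] using h
    rwa [heq] at h'
  have := ht.div (hasDerivAt_id x) hx
  simpa [Pi.div_def] using this

/-- The function `z ↦ tanh(z/2)/z` is strictly decreasing on `(0,∞)`. -/
theorem strictAntiOn_tanh_half_div :
    StrictAntiOn (fun z : ℝ => Real.tanh (z / 2) / z) (Set.Ioi 0) := by
  apply strictAntiOn_of_deriv_neg (convex_Ioi 0)
  · intro x hx
    exact ((tanh_half_div_hasDerivAt (ne_of_gt hx)).continuousAt).continuousWithinAt
  · intro x hx
    rw [interior_Ioi] at hx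
    have hx0 : (0:ℝ) < x := hx
    rw [(tanh_half_div_hasDerivAt hx0.ne').deriv]
    apply div_neg_of_neg_of_pos _ (by positivity)
    have hcpos : (0:ℝ) < Real.cosh (x / 2) := Real.cosh_pos _
    have hlt : x < Real.sinh x := (Real.self_lt_sinh_iff).2 hx0
    have hsinh : Real.sinh x = 2 * Real.sinh (x / 2) * Real.cosh (x / 2) := by
      have := Real.sinh_add (x / 2) (x / 2)
      rw [show x / 2 + x / 2 = x by ring] at this
      rw [this]; ring
    rw [Real.tanh_eq_sinh_div_cosh, sub_neg]
    have hlt2 : x * Real.cosh (x / 2) < Real.sinh x * Real.cosh (x / 2) :=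
      mul_lt_mul_of_pos_right hlt hcpos
    have hc2 : (0:ℝ) < Real.cosh (x / 2) ^ 2 := by positivity
    rw [div_mul_eq_mul_div, div_mul_eq_mul_div, div_lt_div_iff₀ hc2 hcpos]
    nlinarith [hlt2, hsinh]
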